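/- Let c(k) : Fin N → ℝ^d evolve under a distributed update on a directed graph, and define for each node i the radius R_i(k+1, k') = max_{j ∈ N⁻_i} ( ‖c(k'+k+1)(i) − c(k'+k)(j)‖ + R_j(k, k') ) with R_i(0, k') = 0. Then for every node j whose shortest directed path from i has length at most k, c(k')(j) lies in the closed ball of radius R_i(k, k') centered at c(k'+k)(i). In particular, if D is the graph diameter, every node's value at time k' lies in the ball B(c(k'+D)(i), R_i(D, k')). -/

import Mathlib

/-!
Induction on `k`: a node `k + 1` hops upstream of `i` is `k` hops upstream of some in-neighbour `m`
of `i`, and the triangle inequality through `c (k' + k) m` adds the length of the last step at `i`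
to the radius of `m`.
-/

/-- Iterated in-neighborhood: nodes from which `i` can be reached in at most `k` hops. -/
def finNbhdIter {N : ℕ} (Nin : Fin N → Finset (Fin N)) (i : Fin N) : ℕ → Finset (Fin N)
  | 0 => {i}
  | k + 1 => (finNbhdIter Nin i k).biUnion Nin

/- The recursion for `R` branches on the first hop of a path, the definition of `finNbhdIter` on
the last one. -/
lemma finNbhdIter_succ {N : ℕ} (Nin : Fin N → Finset (Fin N)) (i : Fin N) (k : ℕ) :
    finNbhdIter Nin i (k + 1) = (Nin i).biUnion fun j => finNbhdIter Nin j k := by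
  induction k generalizing i with
  | zero => simp [finNbhdIter]
  | succ k ih =>
    rw [finNbhdIter, ih, Finset.biUnion_biUnion]
    rfl

theorem norm_sub_le_of_mem_finNbhdIter {N : ℕ} {E : Type*} [SeminormedAddCommGroup E]
    (c : ℕ → Fin N → E) (Nin : Fin N → Finset (Fin N)) (R : Fin N → ℕ → ℕ → ℝ)
    (hR0 : ∀ i k', 0 ≤ R i 0 k')
    (hRs : ∀ i k k', ∀ j ∈ Nin i, ‖c (k' + k + 1) i - c (k' + k) j‖ + R j k k' ≤ R i (k + 1) k')
    (k k' : ℕ) (i : Fin N) : ∀ j ∈ finNbhdIter Nin i k, ‖c k' j - c (k' + k) i‖ ≤ R i k k' := by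
  induction k generalizing i with
  | zero =>
    intro j hj
    rw [finNbhdIter, Finset.mem_singleton] at hj
    simpa [hj] using hR0 i k'
  | succ k ih =>
    intro j hj
    rw [finNbhdIter_succ, Finset.mem_biUnion] at hj
    obtain ⟨m, hm, hjm⟩ := hj
    calc ‖c k' j - c (k' + (k + 1)) i‖
        ≤ ‖c k' j - c (k' + k) m‖ + ‖c (k' + k + 1) i - c (k' + k) m‖ :=
          (norm_sub_le_norm_sub_add_norm_sub _ _ _).trans_eq
            (by rw [norm_sub_rev (c (k' + k) m)]; rfl)
      _ ≤ ‖c (k' + k + 1) i - c (k' + k) m‖ + R m k k' := by linarith [ih m j hjm]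
      _ ≤ R i (k + 1) k' := hRs i k k' m hm

theorem stmt_16 {N d : ℕ} (c : ℕ → Fin N → EuclideanSpace ℝ (Fin d))
    (Nin : Fin N → Finset (Fin N)) (hself : ∀ i, i ∈ Nin i)
    (R : Fin N → ℕ → ℕ → ℝ)
    (hR0 : ∀ i k', R i 0 k' = 0)
    (hRs : ∀ i k k', R i (k + 1) k' =
      ((Nin i).sup' ⟨i, hself i⟩
        fun j => ‖c (k' + k + 1) i - c (k' + k) j‖ + R j k k')) :
    (∀ k k' i, ∀ j ∈ finNbhdIter Nin i k,
        ‖c k' j - c (k' + k) i‖ ≤ R i k k') ∧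
      ∀ D : ℕ, (∀ i, finNbhdIter Nin i D = Finset.univ) →
        ∀ k' i j, ‖c k' j - c (k' + D) i‖ ≤ R i D k' := by
  have hdom : ∀ i k k', ∀ j ∈ Nin i,
      ‖c (k' + k + 1) i - c (k' + k) j‖ + R j k k' ≤ R i (k + 1) k' := fun i k k' j hj =>
    (hRs i k k').ge.trans' (Finset.le_sup' (fun j => ‖c (k' + k + 1) i - c (k' + k) j‖ + R j k k') hj)
  have hball := norm_sub_le_of_mem_finNbhdIter c Nin R (fun i k' => (hR0 i k').ge) hdom
  refine ⟨hball, fun D hD k' i j => hball D k' i j ?_⟩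
  simp [hD]
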